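/- Let R be an algebraic curvature tensor on a 4n-dimensional quaternion-Hermitian vector space, and define L(R) = Σ_{1 ≤ i < j ≤ 4} Σ_{A=I,J,K} A₍ᵢ₎A₍ⱼ₎R, where A₍ᵢ₎ acts by applying -A to the i-th argument. Then Ric(L(R))(x,y) = 3·Ric(R)(x,y) + Σ_{A=I,J,K} Ric(R)(Ax, Ay). -/

import Mathlib

/-!
An isometric `A` with `A² = -1` is skew-adjoint, so for every bilinear `f` the contraction over an
orthonormal basis satisfies `∑ᵢ f(A eᵢ, eᵢ) = -∑ᵢ f(eᵢ, A eᵢ)` and `∑ᵢ f(A eᵢ, A eᵢ) = ∑ᵢ f(eᵢ, eᵢ)`.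
Hence, of the six terms of `L(R)` belonging to each `A ∈ {I, J, K}`, two pairs cancel after
contraction, one becomes `Ric(R)(x, y)` and the remaining one is `Ric(R)(Ax, Ay)`.
-/

open scoped RealInnerProductSpace

namespace OrthonormalBasis

variable {V : Type*} [NormedAddCommGroup V] [InnerProductSpace ℝ V]
  {ι : Type*} [Fintype ι]

theorem sum_bilin_map_left_eq_map_right (e : OrthonormalBasis ι ℝ V) {A B : V →ₗ[ℝ] V}
    (hAB : ∀ u v : V, ⟪A u, v⟫ = ⟪u, B v⟫) (f : V →ₗ[ℝ] V →ₗ[ℝ] ℝ) :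
    ∑ i, f (A (e i)) (e i) = ∑ i, f (e i) (B (e i)) := by
  have expand : ∀ v : V, v = ∑ j, ⟪e j, v⟫ • e j := fun v => (e.sum_repr' v).symm
  calc ∑ i, f (A (e i)) (e i)
      = ∑ i, ∑ j, ⟪e j, A (e i)⟫ * f (e j) (e i) := by
        refine Finset.sum_congr rfl fun i _ => ?_
        conv_lhs => rw [expand (A (e i))]
        simp [LinearMap.sum_apply]
    _ = ∑ j, ∑ i, ⟪e i, B (e j)⟫ * f (e j) (e i) := by
        rw [Finset.sum_comm]
        refine Finset.sum_congr rfl fun j _ => Finset.sum_congr rfl fun i _ => ?_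
        rw [real_inner_comm, hAB]
    _ = ∑ j, f (e j) (B (e j)) := by
        refine Finset.sum_congr rfl fun j _ => ?_
        conv_rhs => rw [expand (B (e j))]
        simp

theorem sum_bilin_map_map_eq (e : OrthonormalBasis ι ℝ V) {A B : V →ₗ[ℝ] V}
    (hAB : ∀ u v : V, ⟪A u, v⟫ = ⟪u, B v⟫) (hBA : ∀ v : V, A (B v) = v)
    (f : V →ₗ[ℝ] V →ₗ[ℝ] ℝ) :
    ∑ i, f (A (e i)) (A (e i)) = ∑ i, f (e i) (e i) := by
  simpa [hBA] using e.sum_bilin_map_left_eq_map_right hAB (f.compl₂ A)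

end OrthonormalBasis

section ComplexStructure

variable {V : Type*} [NormedAddCommGroup V] [InnerProductSpace ℝ V]

theorem inner_map_left_eq_neg_of_sq_eq_neg {A : V →ₗ[ℝ] V} (hA2 : ∀ v : V, A (A v) = -v)
    (hAiso : ∀ u v : V, ⟪A u, A v⟫ = ⟪u, v⟫) (u v : V) :
    ⟪A u, v⟫ = ⟪u, (-A) v⟫ := by
  simpa [hA2] using hAiso u (-A v)

variable {ι : Type*} [Fintype ι]

theorem sum_pairwise_action_eq_ricci_add_ricci_map (e : OrthonormalBasis ι ℝ V)
    {A : V →ₗ[ℝ] V} (hA2 : ∀ v : V, A (A v) = -v) (hAiso : ∀ u v : V, ⟪A u, A v⟫ = ⟪u, v⟫)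
    (R : V →ₗ[ℝ] V →ₗ[ℝ] V →ₗ[ℝ] V →ₗ[ℝ] ℝ) (x y : V) :
    ∑ i, (R (A x) (A (e i)) y (e i) + R (A x) (e i) (A y) (e i) +
      R (A x) (e i) y (A (e i)) + R x (A (e i)) (A y) (e i) +
      R x (A (e i)) y (A (e i)) + R x (e i) (A y) (A (e i)))
    = ∑ i, R x (e i) y (e i) + ∑ i, R (A x) (e i) (A y) (e i) := by
  have hskew := inner_map_left_eq_neg_of_sq_eq_neg hA2 hAiso
  have cancel₁ := e.sum_bilin_map_left_eq_map_right hskew ((R (A x)).flip y)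
  have cancel₂ := e.sum_bilin_map_left_eq_map_right hskew ((R x).flip (A y))
  have diag := e.sum_bilin_map_map_eq hskew (by simp [hA2]) ((R x).flip y)
  simp only [LinearMap.flip_apply, LinearMap.neg_apply, map_neg, Finset.sum_neg_distrib]
    at cancel₁ cancel₂ diag
  simp only [Finset.sum_add_distrib, cancel₁, cancel₂, diag]
  ring

end ComplexStructure

theorem stmt11_general (V : Type*) [NormedAddCommGroup V] [InnerProductSpace ℝ V]
    (ι : Type*) [Fintype ι] (e : OrthonormalBasis ι ℝ V)
    (I J K : V →ₗ[ℝ] V)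
    (hI2 : ∀ x : V, I (I x) = -x) (hJ2 : ∀ x : V, J (J x) = -x)
    (hK : ∀ x : V, K x = I (J x)) (hIJ : ∀ x : V, I (J x) = -J (I x))
    (hIiso : ∀ x y : V, ⟪I x, I y⟫ = ⟪x, y⟫)
    (hJiso : ∀ x y : V, ⟪J x, J y⟫ = ⟪x, y⟫)
    (hKiso : ∀ x y : V, ⟪K x, K y⟫ = ⟪x, y⟫)
    (R : V →ₗ[ℝ] V →ₗ[ℝ] V →ₗ[ℝ] V →ₗ[ℝ] ℝ)
    (LR : V → V → V → V → ℝ)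
    (hLR : ∀ x y z u : V, LR x y z u =
      (R (I x) (I y) z u + R (I x) y (I z) u + R (I x) y z (I u) +
       R x (I y) (I z) u + R x (I y) z (I u) + R x y (I z) (I u)) +
      (R (J x) (J y) z u + R (J x) y (J z) u + R (J x) y z (J u) +
       R x (J y) (J z) u + R x (J y) z (J u) + R x y (J z) (J u)) +
      (R (K x) (K y) z u + R (K x) y (K z) u + R (K x) y z (K u) +
       R x (K y) (K z) u + R x (K y) z (K u) + R x y (K z) (K u))) :
    ∀ x y : V, (∑ i, LR x (e i) y (e i)) =
      3 * (∑ i, R x (e i) y (e i)) +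
      ((∑ i, R (I x) (e i) (I y) (e i)) + (∑ i, R (J x) (e i) (J y) (e i)) +
       (∑ i, R (K x) (e i) (K y) (e i))) := by
  intro x y
  have hK2 : ∀ v : V, K (K v) = -v := fun v => by simp [hK, hIJ, hI2, hJ2]
  have hIblock := sum_pairwise_action_eq_ricci_add_ricci_map e hI2 hIiso R x y
  have hJblock := sum_pairwise_action_eq_ricci_add_ricci_map e hJ2 hJiso R x y
  have hKblock := sum_pairwise_action_eq_ricci_add_ricci_map e hK2 hKiso R x y
  simp only [hLR, Finset.sum_add_distrib] at hIblock hJblock hKblock ⊢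
  linarith

/-- for `L(R) = Σ_{1≤i<j≤4} Σ_{A=I,J,K} A₍ᵢ₎A₍ⱼ₎ R`, one has
`Ric(L(R))(x,y) = 3 Ric(R)(x,y) + Σ_{A=I,J,K} Ric(R)(Ax, Ay)`. -/
theorem stmt11 (n : ℕ) (V : Type*) [NormedAddCommGroup V] [InnerProductSpace ℝ V]
    [FiniteDimensional ℝ V] (hdim : Module.finrank ℝ V = 4 * n)
    (ι : Type*) [Fintype ι] (e : OrthonormalBasis ι ℝ V)
    (I J K : V →ₗ[ℝ] V)
    (hI2 : ∀ x : V, I (I x) = -x) (hJ2 : ∀ x : V, J (J x) = -x)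
    (hK : ∀ x : V, K x = I (J x)) (hIJ : ∀ x : V, I (J x) = -J (I x))
    (hIiso : ∀ x y : V, ⟪I x, I y⟫ = ⟪x, y⟫)
    (hJiso : ∀ x y : V, ⟪J x, J y⟫ = ⟪x, y⟫)
    (hKiso : ∀ x y : V, ⟪K x, K y⟫ = ⟪x, y⟫)
    (R : V →ₗ[ℝ] V →ₗ[ℝ] V →ₗ[ℝ] V →ₗ[ℝ] ℝ)
    (hskew1 : ∀ x y z u : V, R x y z u = -R y x z u)
    (hskew2 : ∀ x y z u : V, R x y z u = -R x y u z)
    (hpair : ∀ x y z u : V, R x y z u = R z u x y)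
    (hbianchi : ∀ x y z u : V, R x y z u + R y z x u + R z x y u = 0)
    (LR : V → V → V → V → ℝ)
    (hLR : ∀ x y z u : V, LR x y z u =
      (R (I x) (I y) z u + R (I x) y (I z) u + R (I x) y z (I u) +
       R x (I y) (I z) u + R x (I y) z (I u) + R x y (I z) (I u)) +
      (R (J x) (J y) z u + R (J x) y (J z) u + R (J x) y z (J u) +
       R x (J y) (J z) u + R x (J y) z (J u) + R x y (J z) (J u)) +
      (R (K x) (K y) z u + R (K x) y (K z) u + R (K x) y z (K u) +
       R x (K y) (K z) u + R x (K y) z (K u) + R x y (K z) (K u))) :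
    ∀ x y : V, (∑ i, LR x (e i) y (e i)) =
      3 * (∑ i, R x (e i) y (e i)) +
      ((∑ i, R (I x) (e i) (I y) (e i)) + (∑ i, R (J x) (e i) (J y) (e i)) +
       (∑ i, R (K x) (e i) (K y) (e i))) :=
  stmt11_general V ι e I J K hI2 hJ2 hK hIJ hIiso hJiso hKiso R LR hLR
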